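/- Completeness: for all strictly positive formulas φ, ψ, if φ ⊢ ψ is derivable in RC, then 𝒯(φ) ↪* 𝒯(ψ) in the tree rewriting system TRC. -/

import Mathlib

namespace TRC

/-- Strictly positive formulas of `L⁺`. -/
inductive SPF : Type where
  | top : SPF
  | var : ℕ → SPF
  | dia : ℕ → SPF → SPF
  | and : SPF → SPF → SPF

/-- The sequent system `K⁺`. -/
inductive KPlus : SPF → SPF → Prop where
  | id (φ) : KPlus φ φ
  | topI (φ) : KPlus φ .top
  | cut {φ ψ χ} : KPlus φ ψ → KPlus ψ χ → KPlus φ χ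
  | andE₁ (φ ψ) : KPlus (.and φ ψ) φ
  | andE₂ (φ ψ) : KPlus (.and φ ψ) ψ
  | andI {φ ψ χ} : KPlus φ ψ → KPlus φ χ → KPlus φ (.and ψ χ)
  | dist {φ ψ} (α) : KPlus φ ψ → KPlus (.dia α φ) (.dia α ψ)

/-- The Reflection Calculus `RC`. -/
inductive RC : SPF → SPF → Prop where
  | id (φ) : RC φ φ
  | topI (φ) : RC φ .top
  | cut {φ ψ χ} : RC φ ψ → RC ψ χ → RC φ χ
  | andE₁ (φ ψ) : RC (.and φ ψ) φ
  | andE₂ (φ ψ) : RC (.and φ ψ) ψ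
  | andI {φ ψ χ} : RC φ ψ → RC φ χ → RC φ (.and ψ χ)
  | dist {φ ψ} (α) : RC φ ψ → RC (.dia α φ) (.dia α ψ)
  | trans (α φ) : RC (.dia α (.dia α φ)) (.dia α φ)
  | mono {α β} (φ) : β < α → RC (.dia α φ) (.dia β φ)
  | jax {α β} (φ ψ) : β < α → RC (.and (.dia α φ) (.dia β ψ)) (.dia α (.and φ (.dia β ψ)))

/-- Modal depth. -/
def SPF.md : SPF → ℕ
  | .top => 0
  | .var _ => 0
  | .dia _ φ => φ.md + 1
  | .and φ ψ => max φ.md ψ.md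

/-- Modal trees. -/
inductive MTree : Type where
  | node : List ℕ → List (ℕ × MTree) → MTree

/-- Sum of modal trees. -/
def MTree.sum : MTree → MTree → MTree
  | .node Δ₁ Γ₁, .node Δ₂ Γ₂ => .node (Δ₁ ++ Δ₂) (Γ₁ ++ Γ₂)

mutual
/-- Height of a modal tree. -/
def MTree.height : MTree → ℕ
  | .node _ Γ => heightL Γ
def heightL : List (ℕ × MTree) → ℕ
  | [] => 0
  | (_, S) :: Γ => max (S.height + 1) (heightL Γ)
end

mutual
/-- `T.IsPos k`: the (1-indexed) string `k` is a position of `T`. -/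
def MTree.IsPos : MTree → List ℕ → Prop
  | _, [] => True
  | .node _ Γ, i :: k => isPosL Γ i k
def isPosL : List (ℕ × MTree) → ℕ → List ℕ → Prop
  | [], _, _ => False
  | _ :: _, 0, _ => False
  | (_, S) :: _, 1, k => S.IsPos k
  | _ :: Γ, n+2, k => isPosL Γ (n+1) k
end

mutual
/-- Subtree of `T` at position `k` (returning a default junk value off positions). -/
def MTree.subtree : MTree → List ℕ → MTree
  | T, [] => T
  | .node Δ Γ, i :: k => subtreeL (.node Δ Γ) Γ i k
def subtreeL : MTree → List (ℕ × MTree) → ℕ → List ℕ → MTree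
  | d, [], _, _ => d
  | d, _ :: _, 0, _ => d
  | _, (_, S) :: _, 1, k => S.subtree k
  | d, _ :: Γ, n+2, k => subtreeL d Γ (n+1) k
end

mutual
/-- `T.replace S k`: replace the subtree of `T` at position `k` by `S`. -/
def MTree.replace : MTree → MTree → List ℕ → MTree
  | _, S, [] => S
  | .node Δ Γ, S, i :: k => .node Δ (replaceL Γ S i k)
def replaceL : List (ℕ × MTree) → MTree → ℕ → List ℕ → List (ℕ × MTree)
  | [], _, _, _ => []
  | Γ, _, 0, _ => Γ
  | (α, C) :: Γ, S, 1, k => (α, C.replace S k) :: Γ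
  | x :: Γ, S, n+2, k => x :: replaceL Γ S (n+1) k
end

/-- Names of the eight rewriting rules of TRC. -/
inductive Rule : Type where
  | rhoP | rhoM | sigma | piP | piM | four | lam | jay
  deriving DecidableEq

/-- One rewriting step performed at the root. -/
inductive RootStep : Rule → MTree → MTree → Prop where
  | rhoP {Δ Γ i p} (hi : 1 ≤ i) (h : Δ[i-1]? = some p) :
      RootStep .rhoP (.node Δ Γ) (.node (p :: Δ) Γ)
  | rhoM {Δ Γ i} (hi : 1 ≤ i) (h : i - 1 < Δ.length) :
      RootStep .rhoM (.node Δ Γ) (.node (Δ.eraseIdx (i-1)) Γ)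
  | sigma {Δ Γ i j x y} (hi : 1 ≤ i) (hj : 1 ≤ j) (hij : i ≠ j)
      (hx : Γ[i-1]? = some x) (hy : Γ[j-1]? = some y) :
      RootStep .sigma (.node Δ Γ) (.node Δ ((Γ.set (j-1) x).set (i-1) y))
  | piP {Δ Γ i x} (hi : 1 ≤ i) (hx : Γ[i-1]? = some x) :
      RootStep .piP (.node Δ Γ) (.node Δ (x :: Γ))
  | piM {Δ Γ i} (hi : 1 ≤ i) (h : i - 1 < Γ.length) :
      RootStep .piM (.node Δ Γ) (.node Δ (Γ.eraseIdx (i-1)))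
  | four {Δ Γ i j β Δt Γt S} (hi : 1 ≤ i) (hj : 1 ≤ j)
      (hΓ : Γ[i-1]? = some (β, MTree.node Δt Γt)) (hΓt : Γt[j-1]? = some (β, S)) :
      RootStep .four (.node Δ Γ) (.node Δ (Γ.set (i-1) (β, S)))
  | lam {Δ Γ i α β S} (hi : 1 ≤ i) (hβ : β < α) (hΓ : Γ[i-1]? = some (α, S)) :
      RootStep .lam (.node Δ Γ) (.node Δ (Γ.set (i-1) (β, S)))
  | jay {Δ Γ i j α β Δt Γt S} (hi : 1 ≤ i) (hj : 1 ≤ j) (hij : i ≠ j) (hβ : β < α)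
      (hΓi : Γ[i-1]? = some (α, MTree.node Δt Γt)) (hΓj : Γ[j-1]? = some (β, S)) :
      RootStep .jay (.node Δ Γ)
        (.node Δ ((Γ.set (i-1) (α, MTree.node Δt (Γt ++ [(β, S)]))).eraseIdx (j-1)))

/-- One step of the rule `r`, applied at some position. -/
def StepR (r : Rule) (T T' : MTree) : Prop :=
  ∃ k S, T.IsPos k ∧ RootStep r (T.subtree k) S ∧ T' = T.replace S k

/-- One step of the rewriting relation `↪`. -/
def Step (T T' : MTree) : Prop := ∃ r, StepR r T T'

/-- The rewriting relation `↪*`. -/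
def Steps : MTree → MTree → Prop := Relation.ReflTransGen Step

/-- TRC-equivalence `↔*`. -/
def TEquiv (T T' : MTree) : Prop := Steps T T' ∧ Steps T' T

/-- `T ↪^Ω S` : rewriting applying the rules of `Ω` in order, one step each. -/
inductive StepsOf : List Rule → MTree → MTree → Prop where
  | nil (T) : StepsOf [] T T
  | cons {r Ω T U S} : StepR r T U → StepsOf Ω U S → StepsOf (r :: Ω) T S

def AtomicStep (T S : MTree) : Prop := StepR .rhoP T S ∨ StepR .rhoM T S
def DecreasingStep (T S : MTree) : Prop := StepR .piM T S ∨ StepR .four T S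
def ModalStep (T S : MTree) : Prop := StepR .lam T S ∨ StepR .jay T S

/-- Finite conjunctions (empty conjunction is `⊤`). -/
def bigAnd : List SPF → SPF
  | [] => .top
  | φ :: l => .and φ (bigAnd l)

mutual
/-- The embedding `ℱ` of modal trees into formulas. -/
def MTree.toFormula : MTree → SPF
  | .node Δ Γ => .and (bigAnd (Δ.map SPF.var)) (diamL Γ)
def diamL : List (ℕ × MTree) → SPF
  | [] => .top
  | (α, S) :: Γ => .and (.dia α S.toFormula) (diamL Γ)
end

/-- The embedding `𝒯` of formulas into modal trees. -/
def SPF.toTree : SPF → MTree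
  | .top => .node [] []
  | .var p => .node [p] []
  | .dia α φ => .node [] [(α, φ.toTree)]
  | .and φ ψ => φ.toTree.sum ψ.toTree

/-- Nonempty conjunction `φ₁ ∧ (φ₂ ∧ (… ∧ φₙ))`. -/
def conjNE : SPF → List SPF → SPF
  | φ, [] => φ
  | φ, ψ :: l => .and φ (conjNE ψ l)

end TRC

/-!
Induct on the RC derivation. The three RC axioms are single root steps (`𝔣4`, `λ` and `J`).
For the `K⁺` rules, note that `𝒯` sends `∧` to the sum of trees, and that the structural rules
`ρ±`, `π±` carry `⟨Δ;Γ⟩` to any `⟨Δ';Γ'⟩` whose atoms and children all occur in `Δ`, `Γ`.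
This yields weakening, contraction and commutativity of the sum; with commutativity,
congruence of `↪*` under sums only has to be checked on the left summand, where the positions
of a step are unchanged.
-/

theorem List.getElem?_append_of_eq_some {α : Type*} {l₁ l₂ : List α} {n : ℕ} {a : α}
    (h : l₁[n]? = some a) : (l₁ ++ l₂)[n]? = some a := by
  rwa [List.getElem?_append_left (List.getElem?_eq_some_iff.mp h).1]

namespace TRC

open MTree

theorem MTree.isPos_nil (T : MTree) : T.IsPos [] := by cases T; trivial

theorem MTree.subtree_nil (T : MTree) : T.subtree [] = T := by cases T; rfl

theorem MTree.replace_nil (T S : MTree) : T.replace S [] = S := by cases T; rfl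

theorem Step.of_rootStep {r : Rule} {T T' : MTree} (h : RootStep r T T') : Step T T' :=
  ⟨r, [], T', T.isPos_nil, by rwa [T.subtree_nil], (T.replace_nil T').symm⟩

section Rearrangement

variable {Δ Δ' : List ℕ} {Γ Γ' : List (ℕ × MTree)}

theorem Step.node_cons_atom {p : ℕ} (hp : p ∈ Δ) : Step (node Δ Γ) (node (p :: Δ) Γ) := by
  obtain ⟨n, hn, rfl⟩ := List.getElem_of_mem hp
  exact .of_rootStep (RootStep.rhoP (i := n + 1) (by omega) (by simp [hn]))

theorem Step.node_cons_child {x : ℕ × MTree} (hx : x ∈ Γ) :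
    Step (node Δ Γ) (node Δ (x :: Γ)) := by
  obtain ⟨n, hn, rfl⟩ := List.getElem_of_mem hx
  exact .of_rootStep (RootStep.piP (i := n + 1) (by omega) (by simp [hn]))

theorem Steps.node_append_atoms (h : Δ' ⊆ Δ) : Steps (node Δ Γ) (node (Δ' ++ Δ) Γ) := by
  induction Δ' with
  | nil => exact .refl
  | cons p Δ' ih =>
    obtain ⟨hp, h⟩ := List.cons_subset.mp h
    exact (ih h).tail (Step.node_cons_atom (List.mem_append_right _ hp))

theorem Steps.node_append_children (h : Γ' ⊆ Γ) : Steps (node Δ Γ) (node Δ (Γ' ++ Γ)) := by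
  induction Γ' with
  | nil => exact .refl
  | cons x Γ' ih =>
    obtain ⟨hx, h⟩ := List.cons_subset.mp h
    exact (ih h).tail (Step.node_cons_child (List.mem_append_right _ hx))

theorem Steps.node_drop_atoms : Steps (node (Δ' ++ Δ) Γ) (node Δ' Γ) := by
  induction Δ with
  | nil => rw [List.append_nil]; exact .refl
  | cons p Δ ih =>
    have drop_p : Step (node (Δ' ++ p :: Δ) Γ) (node (Δ' ++ Δ) Γ) := by
      simpa [List.eraseIdx_append_of_length_le] using
        Step.of_rootStep (RootStep.rhoM (Δ := Δ' ++ p :: Δ) (Γ := Γ) (i := Δ'.length + 1)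
          (by omega) (by simp))
    exact .head drop_p ih

theorem Steps.node_drop_children : Steps (node Δ (Γ' ++ Γ)) (node Δ Γ') := by
  induction Γ with
  | nil => rw [List.append_nil]; exact .refl
  | cons x Γ ih =>
    have drop_x : Step (node Δ (Γ' ++ x :: Γ)) (node Δ (Γ' ++ Γ)) := by
      simpa [List.eraseIdx_append_of_length_le] using
        Step.of_rootStep (RootStep.piM (Δ := Δ) (Γ := Γ' ++ x :: Γ) (i := Γ'.length + 1)
          (by omega) (by simp))
    exact .head drop_x ih

theorem Steps.node_of_subset (hΔ : Δ' ⊆ Δ) (hΓ : Γ' ⊆ Γ) : Steps (node Δ Γ) (node Δ' Γ') :=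
  (((node_append_atoms hΔ).trans (node_append_children hΓ)).trans node_drop_atoms).trans
    node_drop_children

end Rearrangement

theorem Steps.sum_fst (T U : MTree) : Steps (T.sum U) T := by
  cases T; cases U
  exact .node_of_subset (List.subset_append_left _ _) (List.subset_append_left _ _)

theorem Steps.sum_snd (T U : MTree) : Steps (T.sum U) U := by
  cases T; cases U
  exact .node_of_subset (List.subset_append_right _ _) (List.subset_append_right _ _)

theorem Steps.sum_comm (T U : MTree) : Steps (T.sum U) (U.sum T) := by
  cases T; cases U
  exact .node_of_subset (fun _ ↦ by simp [or_comm]) (fun _ ↦ by simp [or_comm])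

theorem Steps.self_sum (T : MTree) : Steps T (T.sum T) := by
  cases T
  exact .node_of_subset (fun _ ↦ by simp) (fun _ ↦ by simp)

theorem Steps.to_empty (T : MTree) : Steps T (node [] []) := by
  cases T
  exact .node_of_subset (List.nil_subset _) (List.nil_subset _)

section Positions

variable {Γ : List (ℕ × MTree)} {i : ℕ} {k : List ℕ}

theorem isPosL_append (Γ₂ : List (ℕ × MTree)) (h : isPosL Γ i k) : isPosL (Γ ++ Γ₂) i k := by
  induction Γ generalizing i with
  | nil => exact h.elim
  | cons x Γ ih =>
    match i with
    | 0 => exact h.elim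
    | 1 => exact h
    | n + 2 => exact ih h

theorem subtreeL_append (d d' : MTree) (Γ₂ : List (ℕ × MTree)) (h : isPosL Γ i k) :
    subtreeL d (Γ ++ Γ₂) i k = subtreeL d' Γ i k := by
  induction Γ generalizing i with
  | nil => exact h.elim
  | cons x Γ ih =>
    match i with
    | 0 => exact h.elim
    | 1 => rfl
    | n + 2 => exact ih h

theorem replaceL_append (S : MTree) (Γ₂ : List (ℕ × MTree)) (h : isPosL Γ i k) :
    replaceL (Γ ++ Γ₂) S i k = replaceL Γ S i k ++ Γ₂ := by
  induction Γ generalizing i with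
  | nil => exact h.elim
  | cons x Γ ih =>
    match i with
    | 0 => exact h.elim
    | 1 => rfl
    | n + 2 => exact congrArg (x :: ·) (ih h)

end Positions

theorem RootStep.sum_right {r : Rule} {T T' : MTree} (h : RootStep r T T') (U : MTree) :
    RootStep r (T.sum U) (T'.sum U) := by
  obtain ⟨Δ₂, Γ₂⟩ := U
  cases h with
  | rhoP hi h => exact .rhoP hi (List.getElem?_append_of_eq_some h)
  | @rhoM Δ Γ _ hi h =>
    simpa [MTree.sum, List.eraseIdx_append_of_lt_length h] using
      RootStep.rhoM (Δ := Δ ++ Δ₂) (Γ := Γ ++ Γ₂) hi (by simp; omega)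
  | sigma hi hj hij hx hy =>
    simpa [MTree.sum, List.set_append_left, (List.getElem?_eq_some_iff.mp hx).1,
      (List.getElem?_eq_some_iff.mp hy).1] using
      RootStep.sigma (Δ := _ ++ Δ₂) hi hj hij (List.getElem?_append_of_eq_some (l₂ := Γ₂) hx)
        (List.getElem?_append_of_eq_some hy)
  | piP hi hx => exact .piP hi (List.getElem?_append_of_eq_some hx)
  | @piM Δ Γ _ hi h =>
    simpa [MTree.sum, List.eraseIdx_append_of_lt_length h] using
      RootStep.piM (Δ := Δ ++ Δ₂) (Γ := Γ ++ Γ₂) hi (by simp; omega)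
  | four hi hj hΓ hΓt =>
    simpa [MTree.sum, List.set_append_left, (List.getElem?_eq_some_iff.mp hΓ).1] using
      RootStep.four (Δ := _ ++ Δ₂) hi hj (List.getElem?_append_of_eq_some (l₂ := Γ₂) hΓ) hΓt
  | lam hi hβ hΓ =>
    simpa [MTree.sum, List.set_append_left, (List.getElem?_eq_some_iff.mp hΓ).1] using
      RootStep.lam (Δ := _ ++ Δ₂) hi hβ (List.getElem?_append_of_eq_some (l₂ := Γ₂) hΓ)
  | @jay _ Γ i j α β Δt Γt S hi hj hij hβ hΓi hΓj =>
    have hj' : j - 1 < (Γ.set (i - 1) (α, node Δt (Γt ++ [(β, S)]))).length := by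
      simpa using (List.getElem?_eq_some_iff.mp hΓj).1
    simpa [MTree.sum, List.set_append_left, (List.getElem?_eq_some_iff.mp hΓi).1,
      List.eraseIdx_append_of_lt_length hj'] using
      RootStep.jay (Δ := _ ++ Δ₂) hi hj hij hβ (List.getElem?_append_of_eq_some (l₂ := Γ₂) hΓi)
        (List.getElem?_append_of_eq_some hΓj)

theorem Step.sum_right {T T' : MTree} (h : Step T T') (U : MTree) :
    Step (T.sum U) (T'.sum U) := by
  obtain ⟨r, k, S, hpos, hroot, rfl⟩ := h
  obtain ⟨Δ, Γ⟩ := T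
  obtain ⟨Δ₂, Γ₂⟩ := U
  cases k with
  | nil =>
    rw [subtree_nil] at hroot
    rw [replace_nil]
    exact .of_rootStep (hroot.sum_right _)
  | cons i k =>
    exact ⟨r, i :: k, S, isPosL_append Γ₂ hpos,
      by change RootStep r (subtreeL _ (Γ ++ Γ₂) i k) S; rwa [subtreeL_append _ _ Γ₂ hpos],
      congrArg (node (Δ ++ Δ₂)) (replaceL_append S Γ₂ hpos).symm⟩

theorem Steps.sum_right {T T' : MTree} (h : Steps T T') (U : MTree) :
    Steps (T.sum U) (T'.sum U) :=
  Relation.ReflTransGen.lift (MTree.sum · U) (fun _ _ h ↦ h.sum_right U) _ _ h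

theorem Steps.sum_left {T T' : MTree} (h : Steps T T') (U : MTree) :
    Steps (U.sum T) (U.sum T') :=
  ((sum_comm U T).trans (h.sum_right U)).trans (sum_comm T' U)

theorem Steps.sum {T T' U U' : MTree} (hT : Steps T T') (hU : Steps U U') :
    Steps (T.sum U) (T'.sum U') :=
  (hT.sum_right U).trans (hU.sum_left T')

theorem Steps.dia (α : ℕ) {T T' : MTree} (h : Steps T T') :
    Steps (node [] [(α, T)]) (node [] [(α, T')]) :=
  Relation.ReflTransGen.lift (fun X ↦ node [] [(α, X)])
    (fun _ _ ⟨r, k, S, hpos, hroot, hT'⟩ ↦ ⟨r, 1 :: k, S, hpos, hroot, hT' ▸ rfl⟩) _ _ h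

theorem Step.trans_axiom (α : ℕ) (T : MTree) :
    Step (node [] [(α, node [] [(α, T)])]) (node [] [(α, T)]) :=
  .of_rootStep (RootStep.four (i := 1) (j := 1) le_rfl le_rfl rfl rfl)

theorem Step.mono_axiom {α β : ℕ} (hβ : β < α) (T : MTree) :
    Step (node [] [(α, T)]) (node [] [(β, T)]) :=
  .of_rootStep (RootStep.lam (i := 1) le_rfl hβ rfl)

theorem Step.jax_axiom {α β : ℕ} (hβ : β < α) (A B : MTree) :
    Step (node [] [(α, A), (β, B)]) (node [] [(α, A.sum (node [] [(β, B)]))]) := by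
  obtain ⟨Δ, Γ⟩ := A
  simpa [MTree.sum] using
    Step.of_rootStep (RootStep.jay (Γ := [(α, node Δ Γ), (β, B)]) (Δ := [])
      (i := 1) (j := 2) le_rfl (by omega) (by omega) hβ rfl rfl)

end TRC

/-- Completeness: if `φ ⊢_{RC} ψ` then `𝒯(φ) ↪* 𝒯(ψ)`. -/
theorem completeness (φ ψ : TRC.SPF) (h : TRC.RC φ ψ) :
    TRC.Steps φ.toTree ψ.toTree := by
  induction h with
  | id => exact .refl
  | topI => exact TRC.Steps.to_empty _
  | cut _ _ ih₁ ih₂ => exact ih₁.trans ih₂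
  | andE₁ => exact TRC.Steps.sum_fst _ _
  | andE₂ => exact TRC.Steps.sum_snd _ _
  | andI _ _ ih₁ ih₂ => exact (TRC.Steps.self_sum _).trans (ih₁.sum ih₂)
  | dist α _ ih => exact ih.dia α
  | trans α => exact .single (TRC.Step.trans_axiom α _)
  | mono _ hβ => exact .single (TRC.Step.mono_axiom hβ _)
  | jax _ _ hβ => exact .single (TRC.Step.jax_axiom hβ _ _)
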